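/- Let R be a normal subcritical rule. For every T^𝔫_𝔢 ∈ 𝔗∘, the recursively defined coaction Δ^+ : 𝒯 → 𝒯⊗𝒯_+ admits the global formula Δ^+ T^𝔫_𝔢 = Σ_{A} Σ_{𝔢_A, 𝔫_A} (1/𝔢_A!) binom(𝔫, 𝔫_A) (A, 𝔫_A + π𝔢_A, 𝔢|_{E_A}) ⊗ π_+(T/A, [𝔫 − 𝔫_A]_A, 𝔢 + 𝔢_A), where the first sum runs over all non-empty rooted subtrees A of T containing the root, and the second over all 𝔫_A : N_A → ℕ^d with 𝔫_A ≤ 𝔫 and all 𝔢_A : ∂(A,T) → ℕ^d. -/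

import Mathlib

open MeasureTheory
open scoped Classical

noncomputable section

namespace RS

inductive Typ : Type
  | Xi : Typ
  | In : Typ
deriving DecidableEq

/-- multi-indices `ℕ^d` -/
abbrev Nd (d : ℕ) := Fin d → ℕ

/-- edge types `ℰ = 𝔏 × ℕ^d` -/
abbrev ET (d : ℕ) := Typ × Nd d

/-- Decorated rooted trees (with an extended decoration `a : ℝ` at each node),
in the symbolic representation `𝟏^a X^k Ξ_L ∏_{(m,τ) ∈ B} 𝓘_m[τ]`.
Trees of the reduced structure are those with all extended decorations zero. -/
inductive Tr (d : ℕ) : Type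
  | node (a : ℝ) (k : Nd d) (L : List (Nd d)) (B : List (Nd d × Tr d)) : Tr d

namespace Tr

instance {d} : DecidableEq (Tr d) := Classical.decEq _

variable {d : ℕ}

/-- the tree product: join roots, add root decorations -/
def mul : Tr d → Tr d → Tr d
  | node a k L B, node a' k' L' B' => node (a + a') (k + k') (L ++ L') (B ++ B')

/-- the unit tree `𝟏` -/
def one (d : ℕ) : Tr d := node 0 0 [] []

/-- `X^k` -/
def Xpow (k : Nd d) : Tr d := node 0 k [] []

/-- `Ξ_l` -/
def Xi (l : Nd d) : Tr d := node 0 0 [l] []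

/-- `𝓘_m[τ]` -/
def plant (m : Nd d) (τ : Tr d) : Tr d := node 0 0 [] [(m, τ)]

/-- `𝟏^a` -/
def oneA {d : ℕ} (a : ℝ) : Tr d := node a 0 [] []

/-- the `𝔰`-degree of a multi-index -/
def degN (s : Fin d → ℝ) (k : Nd d) : ℝ := ∑ i, (k i : ℝ) * s i

mutual
  /-- the degree `|τ|_𝔰` (ignoring extended decorations) -/
  def deg (s : Fin d → ℝ) (cXi cI : ℝ) : Tr d → ℝ
    | node _ k L B => degN s k + (L.map fun l => cXi - degN s l).sum + degB s cXi cI B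
  def degB (s : Fin d → ℝ) (cXi cI : ℝ) : List (Nd d × Tr d) → ℝ
    | [] => 0
    | y :: ys => (deg s cXi cI y.2 + cI - degN s y.1) + degB s cXi cI ys
end

mutual
  /-- sum of all extended decorations of a tree -/
  def oSum : Tr d → ℝ
    | node a _ _ B => a + oSumB B
  def oSumB : List (Nd d × Tr d) → ℝ
    | [] => 0
    | y :: ys => oSum y.2 + oSumB ys
end

/-- the degree `|τ|₊ = |τ|_𝔰 + Σ_x 𝔬(x)` -/
def degp (s : Fin d → ℝ) (cXi cI : ℝ) (τ : Tr d) : ℝ := deg s cXi cI τ + oSum τ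

/-- trees all of whose extended decorations vanish (i.e. trees of the reduced structure) -/
inductive ZeroO : Tr d → Prop
  | node {k : Nd d} {L : List (Nd d)} {B : List (Nd d × Tr d)} :
      (∀ y ∈ B, ZeroO y.2) → ZeroO (node 0 k L B)

/-- the multiset `𝒩(τ)` of edge decorations at the root -/
def rootN : Tr d → Multiset (ET d)
  | node _ _ L B =>
      (↑(L.map fun l => ((Typ.Xi, l) : ET d)) : Multiset (ET d)) +
      (↑(B.map fun y => ((Typ.In, y.1) : ET d)) : Multiset (ET d))

/-- the polynomial decoration at the root -/
def rootK : Tr d → Nd d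
  | node _ k _ _ => k

/-- the extended decoration at the root -/
def rootO : Tr d → ℝ
  | node a _ _ _ => a

/-- planted trees: `𝟏^a Ξ_l` or `𝟏^a 𝓘_m[σ]` -/
def Planted : Tr d → Prop
  | node _ k L B => k = 0 ∧ L.length + B.length = 1

/-- a tree strongly conforms to a rule `R` if the multiset of outgoing edge
decorations at every node belongs to `R` -/
inductive Conforms (R : Set (Multiset (ET d))) : Tr d → Prop
  | node {a : ℝ} {k : Nd d} {L : List (Nd d)} {B : List (Nd d × Tr d)} :
      rootN (node a k L B) ∈ R → (∀ y ∈ B, Conforms R y.2) →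
      Conforms R (node a k L B)

end Tr

/-- a rule is normal if it is closed under sub-multisets -/
def Normal {d : ℕ} (R : Set (Multiset (ET d))) : Prop :=
  ∀ A B : Multiset (ET d), A ≤ B → B ∈ R → A ∈ R

/-- `reg(N) = Σ_{(𝔱,k) ∈ N} (reg(𝔱) - |k|_𝔰)` -/
def regMS {d : ℕ} (s : Fin d → ℝ) (reg : Typ → ℝ) (N : Multiset (ET d)) : ℝ :=
  (N.map fun o => reg o.1 - Tr.degN s o.2).sum

/-- subcriticality of a rule: there is `reg : 𝔏 → ℝ` with `reg(Ξ) < |Ξ|_𝔰` and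
`reg(𝓘) < |𝓘|_𝔰 + inf_{N ∈ R} reg(N)` -/
def Subcritical {d : ℕ} (s : Fin d → ℝ) (cXi cI : ℝ) (R : Set (Multiset (ET d))) : Prop :=
  ∃ reg : Typ → ℝ, reg Typ.Xi < cXi ∧
    ∃ c : ℝ, (∀ N ∈ R, c ≤ regMS s reg N) ∧ reg Typ.In < cI + c

/-- the set of strongly conforming trees of the reduced structure, `𝔗∘` -/
def Tcirc {d : ℕ} (R : Set (Multiset (ET d))) : Set (Tr d) :=
  {τ | Tr.ZeroO τ ∧ Tr.Conforms R τ}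


/-- the factorial `k! = ∏ (k i)!` of a multi-index -/
def ndFact {d : ℕ} (k : Nd d) : ℕ := ∏ i, (k i).factorial

/-- the (finite, when `s i ≥ 1`) set `{k ∈ ℕ^d : |k|_𝔰 < c}` -/
def lowIdx {d : ℕ} (s : Fin d → ℝ) (c : ℝ) : Finset (Nd d) :=
  (Fintype.piFinset fun _ : Fin d => Finset.range (Nat.ceil (max c 0) + 1)).filter
    fun k => Tr.degN s k < c


variable {d : ℕ}

/-- product on the model of `𝒱 ⊗ 𝒱₊` induced by the tree product on each factor -/
def mul2 (u v : (Tr d × Tr d) →₀ ℝ) : (Tr d × Tr d) →₀ ℝ :=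
  u.sum fun p c => v.sum fun q c' =>
    Finsupp.single (Tr.mul p.1 q.1, Tr.mul p.2 q.2) (c * c')

/-- `Δ⁺ X^k = Σ_{n ≤ k} binom(k,n) X^n ⊗ X^{k-n}` -/
def dpX (k : Nd d) : (Tr d × Tr d) →₀ ℝ :=
  ∑ n ∈ Finset.Iic k,
    Finsupp.single (Tr.Xpow n, Tr.Xpow (k - n)) (∏ i, ((k i).choose (n i) : ℝ))

/-- `Δ⁺ 𝓘_m[τ] = (𝓘_m ⊗ id) Δ⁺τ + Σ_{|l|_𝔰 < |𝓘_m τ|₊} (X^l/l!) ⊗ 𝓘_{l+m}[τ]`,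
given `D = Δ⁺τ` -/
def dpI (s : Fin d → ℝ) (cXi cI : ℝ) (m : Nd d) (τ : Tr d)
    (D : (Tr d × Tr d) →₀ ℝ) : (Tr d × Tr d) →₀ ℝ :=
  (D.sum fun p c => Finsupp.single (Tr.plant m p.1, p.2) c) +
    ∑ l ∈ lowIdx s (Tr.degp s cXi cI τ + cI - Tr.degN s m),
      Finsupp.single (Tr.Xpow l, Tr.plant (l + m) τ) ((ndFact l : ℝ))⁻¹

mutual
  /-- the positive coaction `Δ⁺ : 𝒯 → 𝒯 ⊗ 𝒯₊` (no projection needed on the left) -/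
  def dp (s : Fin d → ℝ) (cXi cI : ℝ) : Tr d → (Tr d × Tr d) →₀ ℝ
    | .node a k L B =>
        mul2 (Finsupp.single (Tr.node a 0 L [], Tr.one d) 1)
          (mul2 (dpX k) (dpB s cXi cI B))
  def dpB (s : Fin d → ℝ) (cXi cI : ℝ) : List (Nd d × Tr d) → (Tr d × Tr d) →₀ ℝ
    | [] => Finsupp.single (Tr.one d, Tr.one d) 1
    | y :: ys => mul2 (dpI s cXi cI y.1 y.2 (dp s cXi cI y.2)) (dpB s cXi cI ys)
end

/-- as `dpI` but with the projection `π₊` (onto the span of trees satisfying `P`)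
applied to the planted tree in the left factor -/
def dpIP (P : Tr d → Prop) (s : Fin d → ℝ) (cXi cI : ℝ) (m : Nd d) (τ : Tr d)
    (D : (Tr d × Tr d) →₀ ℝ) : (Tr d × Tr d) →₀ ℝ :=
  (D.sum fun p c =>
    if P (Tr.plant m p.1) then Finsupp.single (Tr.plant m p.1, p.2) c else 0) +
    ∑ l ∈ lowIdx s (Tr.degp s cXi cI τ + cI - Tr.degN s m),
      Finsupp.single (Tr.Xpow l, Tr.plant (l + m) τ) ((ndFact l : ℝ))⁻¹

mutual
  /-- the positive coproduct `Δ⁺ : 𝒯₊ → 𝒯₊ ⊗ 𝒯₊`, with `π₊` the projection onto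
  the span of the trees satisfying `P` -/
  def dpP (P : Tr d → Prop) (s : Fin d → ℝ) (cXi cI : ℝ) : Tr d → (Tr d × Tr d) →₀ ℝ
    | .node a k L B =>
        mul2 (Finsupp.single (Tr.node a 0 L [], Tr.one d) 1)
          (mul2 (dpX k) (dpPB P s cXi cI B))
  def dpPB (P : Tr d → Prop) (s : Fin d → ℝ) (cXi cI : ℝ) :
      List (Nd d × Tr d) → (Tr d × Tr d) →₀ ℝ
    | [] => Finsupp.single (Tr.one d, Tr.one d) 1
    | y :: ys => mul2 (dpIP P s cXi cI y.1 y.2 (dp s cXi cI y.2)) (dpPB P s cXi cI ys)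
end

variable {d : ℕ}

/-- A tree overlaid with the data of an extraction: at each node, the part `kA ≤ k`
of the polynomial decoration assigned to the extracted subforest, and on each edge a
Boolean (whether the edge belongs to the extracted subforest `A`) together with the
extra edge decoration `𝔢_A` (meaningful on boundary edges only).  Noise edges carry
the data `(l, inA, 𝔢_A)` and kernel edges the data `(m, inA, 𝔢_A, child)`. -/
inductive Ch (d : ℕ) : Type
  | node (a : ℝ) (k kA : Nd d) (L : List (Nd d × Bool × Nd d))
      (B : List (Nd d × Bool × Nd d × Ch d)) : Ch d

namespace Ch

variable {d : ℕ}

mutual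
  /-- the underlying tree -/
  def shape : Ch d → Tr d
    | .node a k _ L B => Tr.node a k (L.map fun x => x.1) (shapeB B)
  def shapeB : List (Nd d × Bool × Nd d × Ch d) → List (Nd d × Tr d)
    | [] => []
    | y :: ys => (y.1, shape y.2.2.2) :: shapeB ys
end

/-- whether this node belongs to `A`, given whether its parent edge does -/
def hasA (pa : Bool) : Ch d → Bool
  | .node _ _ _ L B => pa || L.any (fun x => x.2.1) || B.any (fun y => y.2.1)

/-- validity of extraction data, relative to whether the parent edge is in `A`:
`𝔫_A ≤ 𝔫` supported on nodes of `A`, and `𝔢_A` supported on boundary edges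
(edges not in `A` whose lower endpoint is in `A`). -/
inductive Valid : Bool → Ch d → Prop
  | node {pa : Bool} {a : ℝ} {k kA : Nd d} {L : List (Nd d × Bool × Nd d)}
      {B : List (Nd d × Bool × Nd d × Ch d)} :
      kA ≤ k →
      (hasA pa (Ch.node a k kA L B) = false → kA = 0) →
      (∀ x ∈ L, x.2.1 = true → x.2.2 = 0) →
      (hasA pa (Ch.node a k kA L B) = false → ∀ x ∈ L, x.2.2 = 0) →
      (∀ y ∈ B, y.2.1 = true → y.2.2.1 = 0) →
      (hasA pa (Ch.node a k kA L B) = false → ∀ y ∈ B, y.2.2.1 = 0) →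
      (∀ y ∈ B, Valid y.2.1 y.2.2.2) →
      Valid pa (Ch.node a k kA L B)

/-- validity of the data of a rooted subtree `A` containing the root (used for the
global formula for `Δ⁺`), relative to whether this node belongs to `A`. -/
inductive ValidS : Bool → Ch d → Prop
  | node {inA : Bool} {a : ℝ} {k kA : Nd d} {L : List (Nd d × Bool × Nd d)}
      {B : List (Nd d × Bool × Nd d × Ch d)} :
      kA ≤ k →
      (inA = false → kA = 0) →
      (inA = false → ∀ x ∈ L, x.2.1 = false ∧ x.2.2 = 0) →
      (inA = false → ∀ y ∈ B, y.2.1 = false ∧ y.2.2.1 = 0) →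
      (∀ x ∈ L, x.2.1 = true → x.2.2 = 0) →
      (∀ y ∈ B, y.2.1 = true → y.2.2.1 = 0) →
      (∀ y ∈ B, ValidS y.2.1 y.2.2.2) →
      ValidS inA (Ch.node a k kA L B)

mutual
  /-- the component of the extracted subforest containing this node (meaningful when
  this node belongs to `A`): decorations `𝔫_A + π𝔢_A`, extended decorations kept. -/
  def extr : Ch d → Tr d
    | .node a _ kA L B =>
        Tr.node a (kA + ((L.map fun x => x.2.2).sum + (B.map fun y => y.2.2.1).sum))
          (L.filterMap fun x => if x.2.1 then some x.1 else none) (extrB B)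
  def extrB : List (Nd d × Bool × Nd d × Ch d) → List (Nd d × Tr d)
    | [] => []
    | y :: ys => if y.2.1 then (y.1, extr y.2.2.2) :: extrB ys else extrB ys
end

mutual
  /-- the components of the extracted subforest not containing this node -/
  def comps : Ch d → Multiset (Tr d)
    | .node _ _ _ _ B => compsB B
  def compsB : List (Nd d × Bool × Nd d × Ch d) → Multiset (Tr d)
    | [] => 0
    | y :: ys =>
        (if y.2.1 then comps y.2.2.2
         else (if hasA false y.2.2.2 then {extr y.2.2.2} else 0) + comps y.2.2.2) +
          compsB ys
end

/-- the extracted forest `ℰ(τ; A, 𝔫_A, 𝔢_A)` -/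
def extrF (c : Ch d) : Multiset (Tr d) :=
  (if hasA false c then {extr c} else 0) + comps c

mutual
  /-- the contracted tree `𝒞(τ; A, 𝔫_A, 𝔢_A)`: each connected component of `A` is
  contracted to a single node, carrying decoration `[𝔫 - 𝔫_A]_A`, extended decoration
  `𝔬(A) + |𝔫_A + π𝔢_A|_𝔰`, and the remaining edges are decorated by `𝔢 + 𝔢_A`. -/
  def contract (s : Fin d → ℝ) (cXi cI : ℝ) : Ch d → Tr d
    | .node a k kA L B =>
        contractB s cXi cI
          (Tr.node
            (a + Tr.degN s (kA + ((L.map fun x => x.2.2).sum +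
                (B.map fun y => y.2.2.1).sum)) +
              (L.map fun x => if x.2.1 then cXi - Tr.degN s x.1 else 0).sum +
              (B.map fun y => if y.2.1 then cI - Tr.degN s y.1 else 0).sum)
            (k - kA)
            (L.filterMap fun x => if x.2.1 then none else some (x.1 + x.2.2))
            []) B
  def contractB (s : Fin d → ℝ) (cXi cI : ℝ) :
      Tr d → List (Nd d × Bool × Nd d × Ch d) → Tr d
    | acc, [] => acc
    | acc, y :: ys =>
        contractB s cXi cI
          (Tr.mul acc
            (if y.2.1 then contract s cXi cI y.2.2.2
             else Tr.node 0 0 [] [(y.1 + y.2.2.1, contract s cXi cI y.2.2.2)])) ys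
end

mutual
  /-- the combinatorial weight `binom(𝔫, 𝔫_A) / 𝔢_A!` of the extraction data -/
  def wt : Ch d → ℝ
    | .node _ k kA L B =>
        (∏ i, ((k i).choose (kA i) : ℝ)) *
          (L.map fun x => ((ndFact x.2.2 : ℝ))⁻¹).prod * wtB B
  def wtB : List (Nd d × Bool × Nd d × Ch d) → ℝ
    | [] => 1
    | y :: ys => ((ndFact y.2.2.1 : ℝ))⁻¹ * wt y.2.2.2 * wtB ys
end

end Ch

mutual
  /-- set all extended decorations of a tree to `0` (the projection `𝒬`) -/
  def setO0 : Tr d → Tr d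
    | .node _ k L B => Tr.node 0 k L (setO0B B)
  def setO0B : List (Nd d × Tr d) → List (Nd d × Tr d)
    | [] => []
    | y :: ys => (y.1, setO0 y.2) :: setO0B ys
end

/-- `𝔗₋`: non-planted strongly conforming trees (of the reduced structure) of negative
degree with vanishing polynomial decoration at the root -/
def TMinusRed (R : Set (Multiset (ET d))) (s : Fin d → ℝ) (cXi cI : ℝ) (τ : Tr d) :
    Prop :=
  Tr.ZeroO τ ∧ Tr.Conforms R τ ∧ Tr.deg s cXi cI τ < 0 ∧ Tr.rootK τ = 0 ∧ ¬ Tr.Planted τ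

/-- coefficients of the extraction–contraction coproduct `Δ⁻ : 𝒯 → ℱ₋ ⊗ 𝒯` of the
reduced structure: the coefficient of `F ⊗ σ` in `Δ⁻τ`. -/
def dmRedCoeff (R : Set (Multiset (ET d))) (s : Fin d → ℝ) (cXi cI : ℝ)
    (τ : Tr d) (F : Multiset (Tr d)) (σ : Tr d) : ℝ :=
  ∑ᶠ c ∈ {c : Ch d | Ch.shape c = τ ∧ Ch.Valid false c ∧ Ch.extrF c = F ∧
      setO0 (Ch.contract s cXi cI c) = σ ∧ ∀ ρ ∈ F, TMinusRed R s cXi cI ρ}, Ch.wt c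

/-- coefficients of the multiplicative extension `Δ⁻ : 𝒯₊ → ℱ₋ ⊗ 𝒯₊` (reduced
structure), which never extracts a subforest containing the root -/
def dmRedPCoeff (R : Set (Multiset (ET d))) (s : Fin d → ℝ) (cXi cI : ℝ)
    (τ : Tr d) (F : Multiset (Tr d)) (σ : Tr d) : ℝ :=
  ∑ᶠ c ∈ {c : Ch d | Ch.shape c = τ ∧ Ch.Valid false c ∧ Ch.hasA false c = false ∧
      Ch.extrF c = F ∧ setO0 (Ch.contract s cXi cI c) = σ ∧
      ∀ ρ ∈ F, TMinusRed R s cXi cI ρ}, Ch.wt c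

/-- coefficients of `Δ⁻ : 𝒯₋ → ℱ₋ ⊗ 𝒯₋` (right factor projected by `π₋`) -/
def dmRedMCoeff (R : Set (Multiset (ET d))) (s : Fin d → ℝ) (cXi cI : ℝ)
    (τ : Tr d) (F : Multiset (Tr d)) (σ : Tr d) : ℝ :=
  ∑ᶠ c ∈ {c : Ch d | Ch.shape c = τ ∧ Ch.Valid false c ∧ Ch.extrF c = F ∧
      setO0 (Ch.contract s cXi cI c) = σ ∧ TMinusRed R s cXi cI σ ∧
      ∀ ρ ∈ F, TMinusRed R s cXi cI ρ}, Ch.wt c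

/-- `𝔗∘^ex`: all contractions of strongly conforming (reduced) trees along extracted
subforests with components in `𝔗₋` -/
def TcircEx (R : Set (Multiset (ET d))) (s : Fin d → ℝ) (cXi cI : ℝ) : Set (Tr d) :=
  {σ | ∃ c : Ch d, Tr.ZeroO (Ch.shape c) ∧ Tr.Conforms R (Ch.shape c) ∧
      Ch.Valid false c ∧ Ch.contract s cXi cI c = σ ∧
      ∀ ρ ∈ Ch.extrF c, TMinusRed R s cXi cI ρ}

/-- `𝔗₋^ex`: non-planted trees in `𝔗∘^ex` of negative `𝔰`-degree with vanishing
polynomial decoration at the root -/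
def TMinusEx (R : Set (Multiset (ET d))) (s : Fin d → ℝ) (cXi cI : ℝ) (τ : Tr d) :
    Prop :=
  τ ∈ TcircEx R s cXi cI ∧ Tr.deg s cXi cI τ < 0 ∧ Tr.rootK τ = 0 ∧ ¬ Tr.Planted τ

/-- `𝔗₊^ex`: products `X^k ∏_j 𝓘_{m_j}[τ_j]` with `τ_j ∈ 𝔗∘^ex` and
`|𝓘_{m_j}[τ_j]|₊ > 0` -/
def TPlusEx (R : Set (Multiset (ET d))) (s : Fin d → ℝ) (cXi cI : ℝ) : Tr d → Prop :=
  fun τ => match τ with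
  | .node a _ L B => a = 0 ∧ L = [] ∧
      ∀ y ∈ B, y.2 ∈ TcircEx R s cXi cI ∧
        0 < Tr.degp s cXi cI y.2 + cI - Tr.degN s y.1

/-- coefficients of the extraction–contraction coproduct `Δ⁻_ex : 𝒯^ex → ℱ₋^ex ⊗ 𝒯^ex` -/
def dmExCoeff (R : Set (Multiset (ET d))) (s : Fin d → ℝ) (cXi cI : ℝ)
    (τ : Tr d) (F : Multiset (Tr d)) (σ : Tr d) : ℝ :=
  ∑ᶠ c ∈ {c : Ch d | Ch.shape c = τ ∧ Ch.Valid false c ∧ Ch.extrF c = F ∧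
      Ch.contract s cXi cI c = σ ∧ ∀ ρ ∈ F, TMinusEx R s cXi cI ρ}, Ch.wt c

/-- coefficients of the multiplicative extension `Δ⁻_ex : 𝒯₊^ex → ℱ₋^ex ⊗ 𝒯₊^ex`,
which never extracts a subforest containing the root -/
def dmExPCoeff (R : Set (Multiset (ET d))) (s : Fin d → ℝ) (cXi cI : ℝ)
    (τ : Tr d) (F : Multiset (Tr d)) (σ : Tr d) : ℝ :=
  ∑ᶠ c ∈ {c : Ch d | Ch.shape c = τ ∧ Ch.Valid false c ∧ Ch.hasA false c = false ∧
      Ch.extrF c = F ∧ Ch.contract s cXi cI c = σ ∧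
      ∀ ρ ∈ F, TMinusEx R s cXi cI ρ}, Ch.wt c

/-- coefficients of `Δ⁻_ex : 𝒯₋^ex → ℱ₋^ex ⊗ ℱ₋^ex` (right factor projected) -/
def dmExMCoeff (R : Set (Multiset (ET d))) (s : Fin d → ℝ) (cXi cI : ℝ)
    (τ : Tr d) (F : Multiset (Tr d)) (σ : Tr d) : ℝ :=
  ∑ᶠ c ∈ {c : Ch d | Ch.shape c = τ ∧ Ch.Valid false c ∧ Ch.extrF c = F ∧
      Ch.contract s cXi cI c = σ ∧ TMinusEx R s cXi cI σ ∧
      ∀ ρ ∈ F, TMinusEx R s cXi cI ρ}, Ch.wt c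

variable {d : ℕ}

/-- the set `𝔗₊` of products `X^k ∏_j 𝓘_{m_j}[τ_j]` with `τ_j ∈ 𝔗∘` and
`|𝓘_{m_j}[τ_j]|_𝔰 > 0` (reduced structure) -/
def TPlusRed (R : Set (Multiset (ET d))) (s : Fin d → ℝ) (cXi cI : ℝ) : Tr d → Prop :=
  fun τ => match τ with
  | .node a _ L B => a = 0 ∧ L = [] ∧
      ∀ y ∈ B, Tr.ZeroO y.2 ∧ Tr.Conforms R y.2 ∧
        0 < Tr.deg s cXi cI y.2 + cI - Tr.degN s y.1

/-!
Unfolding the recursion for `Δ⁺` node by node, the root contributes the binomial expansion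
`Δ⁺X^𝔫 = Σ binom(𝔫,𝔫_A) X^{𝔫_A} ⊗ X^{𝔫-𝔫_A}`, and each kernel edge `𝓘_m[τ]` either stays in `A`
(the term `(𝓘_m ⊗ id)Δ⁺τ`, expanded recursively) or becomes a boundary edge with `𝔢_A = e`
(the term `X^e/e! ⊗ 𝓘_{m+e}[τ]`). So `Δ⁺τ` is a sum over a finite set of extraction data, and
this set is exactly that of the data whose contraction lies in `𝔗₊`: the projection `π₊` only
asks each boundary edge to carry a planted tree of positive degree, which is the truncation
`|e|_𝔰 < |𝓘_m τ|_𝔰` in the recursion.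
-/

theorem map_pair_eq_iff {α β : Type*} (L' : List (α × β)) (L : List α) (b : β) :
    L.map (fun l => (l, b)) = L' ↔ L'.map Prod.fst = L ∧ ∀ x ∈ L', x.2 = b := by
  constructor
  · rintro rfl
    simp [Function.comp_def]
  · rintro ⟨rfl, h⟩
    conv_rhs => rw [← List.map_id L']
    rw [List.map_map]
    exact List.map_congr_left fun x hx => Prod.ext rfl (h x hx).symm

theorem mem_image_cons_product {α : Type*} [DecidableEq α] (S : Finset α) (T : Finset (List α))
    (y : α) (ys : List α) :
    y :: ys ∈ (S ×ˢ T).image (fun z => z.1 :: z.2) ↔ y ∈ S ∧ ys ∈ T := by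
  simp

namespace Tr

theorem mul_assoc (x y z : Tr d) : mul (mul x y) z = mul x (mul y z) := by
  cases x; cases y; cases z; simp [mul, add_assoc]

@[simp] theorem one_mul (x : Tr d) : mul (one d) x = x := by
  cases x; simp [mul, one]

@[simp] theorem mul_one (x : Tr d) : mul x (one d) = x := by
  cases x; simp [mul, one]

theorem le_degN {s : Fin d → ℝ} (hs : ∀ i, 1 ≤ s i) (l : Nd d) (i : Fin d) :
    (l i : ℝ) ≤ degN s l :=
  calc (l i : ℝ) ≤ l i * s i := le_mul_of_one_le_right (Nat.cast_nonneg _) (hs i)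
    _ ≤ degN s l := Finset.single_le_sum
        (fun j _ => mul_nonneg (Nat.cast_nonneg _) (zero_le_one.trans (hs j)))
        (Finset.mem_univ i)

@[simp] theorem degN_zero (s : Fin d → ℝ) : degN s 0 = 0 := by
  simp [degN]

theorem degN_add (s : Fin d → ℝ) (m e : Nd d) : degN s (m + e) = degN s m + degN s e := by
  simp [degN, add_mul, Finset.sum_add_distrib]

mutual
  theorem oSum_eq_zero {τ : Tr d} (h : ZeroO τ) : oSum τ = 0 := by
    cases h with
    | node hB => simp [oSum, oSumB_eq_zero hB]
  theorem oSumB_eq_zero {B : List (Nd d × Tr d)} (h : ∀ y ∈ B, ZeroO y.2) : oSumB B = 0 := by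
    cases B with
    | nil => simp [oSumB]
    | cons y ys =>
      obtain ⟨hy, hys⟩ := List.forall_mem_cons.1 h
      simp [oSumB, oSum_eq_zero hy, oSumB_eq_zero hys]
end

theorem degp_eq_deg {τ : Tr d} (h : ZeroO τ) (s : Fin d → ℝ) (cXi cI : ℝ) :
    degp s cXi cI τ = deg s cXi cI τ := by
  rw [degp, oSum_eq_zero h, add_zero]

end Tr

theorem mem_lowIdx {s : Fin d → ℝ} (hs : ∀ i, 1 ≤ s i) {c : ℝ} {l : Nd d} :
    l ∈ lowIdx s c ↔ Tr.degN s l < c := by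
  simp only [lowIdx, Finset.mem_filter, Fintype.mem_piFinset, Finset.mem_range,
    and_iff_right_iff_imp]
  intro h i
  have : (l i : ℝ) ≤ ⌈max c 0⌉₊ :=
    (Tr.le_degN hs l i).trans (h.le.trans ((le_max_left c 0).trans (Nat.le_ceil _)))
  exact Nat.lt_succ_of_le (by exact_mod_cast this)

theorem setO0B_append (B B' : List (Nd d × Tr d)) :
    setO0B (B ++ B') = setO0B B ++ setO0B B' := by
  induction B with
  | nil => simp [setO0B]
  | cons y ys ih => simp [setO0B, ih]

theorem setO0_mul (x y : Tr d) : setO0 (Tr.mul x y) = Tr.mul (setO0 x) (setO0 y) := by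
  cases x; cases y; simp [Tr.mul, setO0, setO0B_append]

@[simp] theorem rootO_setO0 (x : Tr d) : Tr.rootO (setO0 x) = 0 := by
  cases x; simp [setO0, Tr.rootO]

mutual
  theorem setO0_of_zeroO {τ : Tr d} (h : Tr.ZeroO τ) : setO0 τ = τ := by
    cases h with
    | node hB => simp [setO0, setO0B_of_zeroO hB]
  theorem setO0B_of_zeroO {B : List (Nd d × Tr d)} (h : ∀ y ∈ B, Tr.ZeroO y.2) :
      setO0B B = B := by
    cases B with
    | nil => simp [setO0B]
    | cons y ys =>
      obtain ⟨hy, hys⟩ := List.forall_mem_cons.1 h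
      simp [setO0B, setO0_of_zeroO hy, setO0B_of_zeroO hys]
end

section TPlusRed

variable {R : Set (Multiset (ET d))} {s : Fin d → ℝ} {cXi cI : ℝ}

theorem TPlusRed_mul {x y : Tr d} (hx : Tr.rootO x = 0) (hy : Tr.rootO y = 0) :
    TPlusRed R s cXi cI (Tr.mul x y) ↔ TPlusRed R s cXi cI x ∧ TPlusRed R s cXi cI y := by
  cases x with
  | node a k L B =>
    cases y with
    | node a' k' L' B' =>
      simp only [Tr.rootO] at hx hy
      subst hx hy
      simp only [Tr.mul, TPlusRed, List.append_eq_nil_iff, List.mem_append, add_zero,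
        true_and, or_imp, forall_and]
      tauto

theorem TPlusRed_plant (m : Nd d) (τ : Tr d) :
    TPlusRed R s cXi cI (Tr.plant m τ) ↔
      Tr.ZeroO τ ∧ Tr.Conforms R τ ∧ 0 < Tr.deg s cXi cI τ + cI - Tr.degN s m := by
  simp [TPlusRed, Tr.plant]

end TPlusRed

theorem mul2_single_single (p q : Tr d × Tr d) (c c' : ℝ) :
    mul2 (Finsupp.single p c) (Finsupp.single q c') =
      Finsupp.single (Tr.mul p.1 q.1, Tr.mul p.2 q.2) (c * c') := by
  rw [mul2, Finsupp.sum_single_index, Finsupp.sum_single_index] <;> simp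

theorem mul2_add_left (u u' v : (Tr d × Tr d) →₀ ℝ) :
    mul2 (u + u') v = mul2 u v + mul2 u' v := by
  rw [mul2, Finsupp.sum_add_index] <;> simp [mul2, add_mul, Finsupp.sum_add]

theorem mul2_add_right (u v v' : (Tr d × Tr d) →₀ ℝ) :
    mul2 u (v + v') = mul2 u v + mul2 u v' := by
  rw [mul2, mul2, mul2, ← Finsupp.sum_add]
  congr 1
  funext p c
  rw [Finsupp.sum_add_index] <;> simp [mul_add]

theorem mul2_sum_left {α : Type*} (S : Finset α) (f : α → (Tr d × Tr d) →₀ ℝ)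
    (v : (Tr d × Tr d) →₀ ℝ) : mul2 (∑ i ∈ S, f i) v = ∑ i ∈ S, mul2 (f i) v :=
  map_sum (AddMonoidHom.mk' (mul2 · v) (mul2_add_left · · v)) f S

theorem mul2_sum_right {α : Type*} (S : Finset α) (u : (Tr d × Tr d) →₀ ℝ)
    (f : α → (Tr d × Tr d) →₀ ℝ) : mul2 u (∑ i ∈ S, f i) = ∑ i ∈ S, mul2 u (f i) :=
  map_sum (AddMonoidHom.mk' (mul2 u) (mul2_add_right u)) f S

theorem mul2_sum_single {α β : Type*} (S : Finset α) (T : Finset β)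
    (f : α → Tr d × Tr d) (g : β → Tr d × Tr d) (a : α → ℝ) (b : β → ℝ) :
    mul2 (∑ i ∈ S, Finsupp.single (f i) (a i)) (∑ j ∈ T, Finsupp.single (g j) (b j)) =
      ∑ z ∈ S ×ˢ T, Finsupp.single (Tr.mul (f z.1).1 (g z.2).1, Tr.mul (f z.1).2 (g z.2).2)
        (a z.1 * b z.2) := by
  rw [Finset.sum_product, mul2_sum_left]
  simp only [mul2_sum_right, mul2_single_single]

namespace Ch

mutual
  def unmarked : Tr d → Ch d
    | .node a k L B => .node a k 0 (L.map fun l => (l, false, 0)) (unmarkedB B)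
  def unmarkedB : List (Nd d × Tr d) → List (Nd d × Bool × Nd d × Ch d)
    | [] => []
    | y :: ys => (y.1, false, 0, unmarked y.2) :: unmarkedB ys
end

theorem unmarkedB_eq_map (B : List (Nd d × Tr d)) :
    unmarkedB B = B.map fun y => (y.1, false, (0 : Nd d), unmarked y.2) := by
  induction B with
  | nil => rw [unmarkedB, List.map_nil]
  | cons y ys ih => rw [unmarkedB, ih, List.map_cons]

mutual
  theorem shape_unmarked (τ : Tr d) : shape (unmarked τ) = τ := by
    cases τ with
    | node a k L B => simp [unmarked, shape, shapeB_unmarkedB B, Function.comp_def]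
  theorem shapeB_unmarkedB (B : List (Nd d × Tr d)) : shapeB (unmarkedB B) = B := by
    cases B with
    | nil => simp [unmarkedB, shapeB]
    | cons y ys => simp [unmarkedB, shapeB, shape_unmarked y.2, shapeB_unmarkedB ys]
end

mutual
  theorem wt_unmarked (τ : Tr d) : wt (unmarked τ) = 1 := by
    cases τ with
    | node a k L B => simp [unmarked, wt, wtB_unmarkedB B, Function.comp_def, ndFact]
  theorem wtB_unmarkedB (B : List (Nd d × Tr d)) : wtB (unmarkedB B) = 1 := by
    cases B with
    | nil => rw [unmarkedB, wtB]
    | cons y ys => simp [unmarkedB, wtB, wt_unmarked y.2, wtB_unmarkedB ys, ndFact]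
end

theorem validS_true_node_iff {a : ℝ} {k kA : Nd d} {L : List (Nd d × Bool × Nd d)}
    {B : List (Nd d × Bool × Nd d × Ch d)} :
    ValidS true (node a k kA L B) ↔ kA ≤ k ∧ (∀ x ∈ L, x.2.1 = true → x.2.2 = 0) ∧
      (∀ y ∈ B, y.2.1 = true → y.2.2.1 = 0) ∧ ∀ y ∈ B, ValidS y.2.1 y.2.2.2 := by
  constructor
  · rintro ⟨h₁, -, -, -, h₅, h₆, h₇⟩
    exact ⟨h₁, h₅, h₆, h₇⟩
  · rintro ⟨h₁, h₅, h₆, h₇⟩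
    exact .node h₁ nofun nofun nofun h₅ h₆ h₇

mutual
  theorem validS_unmarked (τ : Tr d) : ValidS false (unmarked τ) := by
    cases τ with
    | node a k L B =>
      refine .node (fun _ => Nat.zero_le _) (fun _ => rfl) ?_ ?_ ?_ ?_ (validS_unmarkedB B)
      all_goals simp +contextual [unmarkedB_eq_map]
  theorem validS_unmarkedB (B : List (Nd d × Tr d)) :
      ∀ y ∈ unmarkedB B, ValidS y.2.1 y.2.2.2 := by
    cases B with
    | nil => simp [unmarkedB]
    | cons y ys =>
      rw [unmarkedB]
      exact List.forall_mem_cons.2 ⟨validS_unmarked y.2, validS_unmarkedB ys⟩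
end

mutual
  theorem eq_unmarked_of_validS_false {c : Ch d} (h : ValidS false c) :
      c = unmarked (shape c) := by
    cases h with
    | @node _ a k kA L B _ hkA hL hB _ _ hval =>
      have hB' : ∀ y ∈ B, y.2.1 = false ∧ y.2.2.1 = 0 ∧ ValidS false y.2.2.2 :=
        fun y hy => ⟨(hB rfl y hy).1, (hB rfl y hy).2, (hB rfl y hy).1 ▸ hval y hy⟩
      rw [shape, unmarked, hkA rfl, ← eq_unmarkedB_of_validS_false hB']
      congr 1
      exact ((map_pair_eq_iff L _ (false, 0)).2
        ⟨rfl, fun x hx => Prod.ext (hL rfl x hx).1 (hL rfl x hx).2⟩).symm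
  theorem eq_unmarkedB_of_validS_false {B : List (Nd d × Bool × Nd d × Ch d)}
      (h : ∀ y ∈ B, y.2.1 = false ∧ y.2.2.1 = 0 ∧ ValidS false y.2.2.2) :
      B = unmarkedB (shapeB B) := by
    cases B with
    | nil => rw [shapeB, unmarkedB]
    | cons y ys =>
      obtain ⟨⟨hb, he, hv⟩, hys⟩ := List.forall_mem_cons.1 h
      obtain ⟨m, b, e, c⟩ := y
      dsimp only at hb he hv
      subst hb he
      rw [shapeB, unmarkedB, ← eq_unmarked_of_validS_false hv,
        ← eq_unmarkedB_of_validS_false hys]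
end

theorem validS_false_iff {c : Ch d} : ValidS false c ↔ c = unmarked (shape c) :=
  ⟨eq_unmarked_of_validS_false, fun h => h ▸ validS_unmarked _⟩

section Contraction

variable (s : Fin d → ℝ) (cXi cI : ℝ)

theorem contractB_eq_mul (cs : List (Nd d × Bool × Nd d × Ch d)) (acc : Tr d) :
    contractB s cXi cI acc cs = Tr.mul acc (contractB s cXi cI (Tr.one d) cs) := by
  induction cs generalizing acc with
  | nil => simp [contractB]
  | cons y ys ih =>
    rw [contractB, contractB, ih, ih (Tr.mul (Tr.one d) _), ← Tr.mul_assoc, Tr.one_mul]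

theorem contract_node (a : ℝ) (k kA : Nd d) (L : List (Nd d × Bool × Nd d))
    (B : List (Nd d × Bool × Nd d × Ch d)) :
    contract s cXi cI (node a k kA L B) =
      Tr.mul
        (Tr.node
          (a + Tr.degN s (kA + ((L.map fun x => x.2.2).sum + (B.map fun y => y.2.2.1).sum)) +
            (L.map fun x => if x.2.1 then cXi - Tr.degN s x.1 else 0).sum +
            (B.map fun y => if y.2.1 then cI - Tr.degN s y.1 else 0).sum)
          (k - kA) (L.filterMap fun x => if x.2.1 then none else some (x.1 + x.2.2)) [])
        (contractB s cXi cI (Tr.one d) B) := by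
  rw [contract, contractB_eq_mul]

def contractList (cs : List (Nd d × Bool × Nd d × Ch d)) : Tr d :=
  setO0 (contractB s cXi cI (Tr.one d) cs)

@[simp] theorem rootO_contractList (cs : List (Nd d × Bool × Nd d × Ch d)) :
    Tr.rootO (contractList s cXi cI cs) = 0 :=
  rootO_setO0 _

theorem contractList_cons (y : Nd d × Bool × Nd d × Ch d)
    (ys : List (Nd d × Bool × Nd d × Ch d)) :
    contractList s cXi cI (y :: ys) =
      Tr.mul (contractList s cXi cI [y]) (contractList s cXi cI ys) := by
  rw [contractList, contractList, contractList, contractB, contractB_eq_mul, contractB,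
    contractB, setO0_mul]

theorem contractList_singleton (y : Nd d × Bool × Nd d × Ch d) :
    contractList s cXi cI [y] = if y.2.1 then setO0 (contract s cXi cI y.2.2.2)
      else Tr.plant (y.1 + y.2.2.1) (setO0 (contract s cXi cI y.2.2.2)) := by
  obtain ⟨m, b, e, c⟩ := y
  rw [contractList, contractB, contractB, Tr.one_mul]
  cases b
  · rw [if_neg Bool.false_ne_true, if_neg Bool.false_ne_true, setO0, setO0B, setO0B]
    rfl
  · rw [if_pos rfl, if_pos rfl]

mutual
  theorem contract_unmarked (τ : Tr d) : contract s cXi cI (unmarked τ) = τ := by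
    cases τ with
    | node a k L B =>
      rw [unmarked, contract_node, contractB_unmarkedB B, unmarkedB_eq_map]
      simp [Tr.mul, Function.comp_def, List.filterMap_map]
  theorem contractB_unmarkedB (B : List (Nd d × Tr d)) :
      contractB s cXi cI (Tr.one d) (unmarkedB B) = Tr.node 0 0 [] B := by
    cases B with
    | nil => rw [unmarkedB, contractB, Tr.one]
    | cons y ys =>
      rw [unmarkedB, contractB, contractB_eq_mul, contractB_unmarkedB ys,
        contract_unmarked y.2]
      simp [Tr.mul, Tr.one]
end

theorem contractList_unmarked (m e : Nd d) {τ : Tr d} (hτ : Tr.ZeroO τ) :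
    contractList s cXi cI [(m, false, e, unmarked τ)] = Tr.plant (m + e) τ := by
  simp [contractList_singleton, contract_unmarked, setO0_of_zeroO hτ]

theorem setO0_contract_node (a : ℝ) (k n : Nd d) (L : List (Nd d))
    (cs : List (Nd d × Bool × Nd d × Ch d)) :
    setO0 (contract s cXi cI (node a k n (L.map fun l => (l, true, 0)) cs)) =
      Tr.mul (Tr.one d) (Tr.mul (Tr.Xpow (k - n)) (contractList s cXi cI cs)) := by
  rw [contract_node, setO0_mul, Tr.one_mul, contractList]
  simp [setO0, setO0B, Tr.Xpow, List.filterMap_map]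

end Contraction

/-- The part of `(A, 𝔫_A + π𝔢_A, 𝔢)` carried by the kernel edges `cs` leaving a node of `A`;
`contractList` is the corresponding part of the contracted tree. -/
def extrList (cs : List (Nd d × Bool × Nd d × Ch d)) : Tr d :=
  Tr.node 0 (cs.map fun y => y.2.2.1).sum [] (extrB cs)

theorem extrList_cons (y : Nd d × Bool × Nd d × Ch d)
    (ys : List (Nd d × Bool × Nd d × Ch d)) :
    extrList (y :: ys) = Tr.mul (extrList [y]) (extrList ys) := by
  obtain ⟨m, b, e, c⟩ := y
  cases b <;> simp [extrList, extrB, Tr.mul]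

theorem extr_node (a : ℝ) (k n : Nd d) (L : List (Nd d))
    (cs : List (Nd d × Bool × Nd d × Ch d)) :
    extr (node a k n (L.map fun l => (l, true, 0)) cs) =
      Tr.mul (Tr.node a 0 L []) (Tr.mul (Tr.Xpow n) (extrList cs)) := by
  simp [extr, extrList, Tr.mul, Tr.Xpow, Function.comp_def, List.filterMap_map]

theorem wtB_cons (y : Nd d × Bool × Nd d × Ch d)
    (ys : List (Nd d × Bool × Nd d × Ch d)) :
    wtB (y :: ys) = wtB [y] * wtB ys := by
  simp [wtB]

theorem wt_node (a : ℝ) (k n : Nd d) (L : List (Nd d))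
    (cs : List (Nd d × Bool × Nd d × Ch d)) :
    wt (node a k n (L.map fun l => (l, true, 0)) cs) =
      1 * ((∏ i, ((k i).choose (n i) : ℝ)) * wtB cs) := by
  simp [wt, Function.comp_def, ndFact]

section Cuts

variable (s : Fin d → ℝ) (cXi cI : ℝ)

mutual
  /-- Extraction data of rooted subtrees, enumerated as the recursion for `Δ⁺` generates them:
  below a node of `A` each kernel edge either lies in `A` or is a boundary edge with decoration
  `e`, kept only if the planted tree `𝓘_{m+e}[τ]` has positive degree. -/
  def cuts : Tr d → Finset (Ch d)
    | .node a k L B =>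
        ((Finset.Iic k) ×ˢ cutsB B).image fun z =>
          node a k z.1 (L.map fun l => (l, true, 0)) z.2
  def cutsB : List (Nd d × Tr d) → Finset (List (Nd d × Bool × Nd d × Ch d))
    | [] => {[]}
    | y :: ys =>
        ((((cuts y.2).image fun c => (y.1, true, 0, c)) ∪
            ((lowIdx s (Tr.deg s cXi cI y.2 + cI - Tr.degN s y.1)).image
              fun e => (y.1, false, e, unmarked y.2))) ×ˢ cutsB ys).image
          fun z => z.1 :: z.2
end

def edgeCuts (m : Nd d) (τ : Tr d) : Finset (Nd d × Bool × Nd d × Ch d) :=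
  ((cuts s cXi cI τ).image fun c => (m, true, 0, c)) ∪
    ((lowIdx s (Tr.deg s cXi cI τ + cI - Tr.degN s m)).image fun e =>
      (m, false, e, unmarked τ))

theorem cutsB_cons (y : Nd d × Tr d) (ys : List (Nd d × Tr d)) :
    cutsB s cXi cI (y :: ys) =
      (edgeCuts s cXi cI y.1 y.2 ×ˢ cutsB s cXi cI ys).image fun z => z.1 :: z.2 := by
  rw [cutsB, edgeCuts]

theorem dpI_eq_sum_edgeCuts (m : Nd d) {τ : Tr d} (hτ : Tr.ZeroO τ)
    (hdp : dp s cXi cI τ = ∑ c ∈ cuts s cXi cI τ,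
      Finsupp.single (extr c, setO0 (contract s cXi cI c)) (wt c)) :
    dpI s cXi cI m τ (dp s cXi cI τ) = ∑ y ∈ edgeCuts s cXi cI m τ,
      Finsupp.single (extrList [y], contractList s cXi cI [y]) (wtB [y]) := by
  have hdisj : Disjoint ((cuts s cXi cI τ).image fun c => (m, true, (0 : Nd d), c))
      ((lowIdx s (Tr.deg s cXi cI τ + cI - Tr.degN s m)).image
        fun e => (m, false, e, unmarked τ)) := by
    simp [Finset.disjoint_left]
  have hmap : ((∑ c ∈ cuts s cXi cI τ,
        Finsupp.single (extr c, setO0 (contract s cXi cI c)) (wt c)).sum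
      fun p c => Finsupp.single (Tr.plant m p.1, p.2) c) =
      Finsupp.mapDomain (fun p : Tr d × Tr d => (Tr.plant m p.1, p.2))
        (∑ c ∈ cuts s cXi cI τ,
          Finsupp.single (extr c, setO0 (contract s cXi cI c)) (wt c)) := rfl
  rw [dpI, hdp, hmap, edgeCuts, Finset.sum_union hdisj, Finsupp.mapDomain_finsetSum,
    Finset.sum_image (by simp), Finset.sum_image (by simp), Tr.degp_eq_deg hτ]
  congr 1
  · refine Finset.sum_congr rfl fun c _ => ?_
    simp [Finsupp.mapDomain_single, extrList, extrB, contractList_singleton, wtB, ndFact,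
      Tr.plant]
  · refine Finset.sum_congr rfl fun e _ => ?_
    simp [extrList, extrB, contractList_unmarked s cXi cI _ _ hτ, wtB, wt_unmarked, Tr.Xpow,
      add_comm]

mutual
  theorem dp_eq_sum_cuts {τ : Tr d} (hτ : Tr.ZeroO τ) :
      dp s cXi cI τ = ∑ c ∈ cuts s cXi cI τ,
        Finsupp.single (extr c, setO0 (contract s cXi cI c)) (wt c) := by
    cases hτ with
    | @node k L B hB =>
      rw [dp, dpB_eq_sum_cutsB hB, dpX, mul2_sum_single, mul2_sum_right, cuts,
        Finset.sum_image fun _ _ _ _ h => by injection h with _ _ h₁ _ h₂; exact Prod.ext h₁ h₂]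
      refine Finset.sum_congr rfl fun z _ => ?_
      rw [mul2_single_single, extr_node, setO0_contract_node, wt_node]
  theorem dpB_eq_sum_cutsB {B : List (Nd d × Tr d)} (hB : ∀ y ∈ B, Tr.ZeroO y.2) :
      dpB s cXi cI B = ∑ cs ∈ cutsB s cXi cI B,
        Finsupp.single (extrList cs, contractList s cXi cI cs) (wtB cs) := by
    cases B with
    | nil =>
      rw [dpB, cutsB, Finset.sum_singleton]
      simp [extrList, extrB, contractList, contractB, wtB, Tr.one, setO0, setO0B]
    | cons y ys =>
      obtain ⟨hy, hys⟩ := List.forall_mem_cons.1 hB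
      rw [dpB, dpB_eq_sum_cutsB hys, dpI_eq_sum_edgeCuts s cXi cI y.1 hy (dp_eq_sum_cuts hy),
        mul2_sum_single, cutsB_cons, Finset.sum_image (by simp)]
      refine Finset.sum_congr rfl fun z _ => ?_
      rw [extrList_cons z.1 z.2, contractList_cons s cXi cI z.1 z.2, wtB_cons z.1 z.2]
end

end Cuts

section Membership

variable (R : Set (Multiset (ET d)))

def AdmissibleEdge (s : Fin d → ℝ) (cXi cI : ℝ) (y : Nd d × Bool × Nd d × Ch d) : Prop :=
  ValidS y.2.1 y.2.2.2 ∧ (y.2.1 = true → y.2.2.1 = 0) ∧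
    TPlusRed R s cXi cI (contractList s cXi cI [y])

theorem TPlusRed_contractList_iff (s : Fin d → ℝ) (cXi cI : ℝ)
    (cs : List (Nd d × Bool × Nd d × Ch d)) :
    TPlusRed R s cXi cI (contractList s cXi cI cs) ↔
      ∀ y ∈ cs, TPlusRed R s cXi cI (contractList s cXi cI [y]) := by
  induction cs with
  | nil => simp [contractList, contractB, Tr.one, setO0, setO0B, TPlusRed]
  | cons y ys ih =>
    rw [contractList_cons, TPlusRed_mul (rootO_contractList ..) (rootO_contractList ..), ih,
      List.forall_mem_cons]

theorem mem_edgeCuts_iff {s : Fin d → ℝ} (hs : ∀ i, 1 ≤ s i) (cXi cI : ℝ) {m : Nd d}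
    {τ : Tr d} (hZ : Tr.ZeroO τ) (hC : Tr.Conforms R τ)
    (hcuts : ∀ c, c ∈ cuts s cXi cI τ ↔ shape c = τ ∧ ValidS true c ∧
      TPlusRed R s cXi cI (setO0 (contract s cXi cI c)))
    (y : Nd d × Bool × Nd d × Ch d) :
    y ∈ edgeCuts s cXi cI m τ ↔ y.1 = m ∧ shape y.2.2.2 = τ ∧ AdmissibleEdge R s cXi cI y := by
  obtain ⟨m', b, e, c⟩ := y
  cases b
  · simp only [edgeCuts, Finset.mem_union, Finset.mem_image, Prod.mk.injEq, AdmissibleEdge,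
      validS_false_iff, Bool.true_eq_false, Bool.false_eq_true, false_and, and_false,
      exists_false, false_or, false_imp_iff, true_and]
    constructor
    · rintro ⟨e, he, rfl, rfl, rfl⟩
      rw [mem_lowIdx hs] at he
      refine ⟨rfl, shape_unmarked τ, by rw [shape_unmarked], ?_⟩
      rw [contractList_unmarked _ _ _ _ _ hZ, TPlusRed_plant, Tr.degN_add]
      exact ⟨hZ, hC, by linarith⟩
    · rintro ⟨rfl, rfl, hc, hp⟩
      rw [hc, contractList_unmarked _ _ _ _ _ hZ, TPlusRed_plant, Tr.degN_add] at hp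
      exact ⟨e, (mem_lowIdx hs).2 (by linarith), rfl, rfl, hc.symm⟩
  · simp only [edgeCuts, Finset.mem_union, Finset.mem_image, Prod.mk.injEq, AdmissibleEdge,
      hcuts, contractList_singleton, Bool.false_eq_true, false_and, and_false, exists_false,
      or_false, true_and, if_true, forall_const]
    constructor
    · rintro ⟨c, ⟨hsh, hv, hp⟩, rfl, rfl, rfl⟩
      exact ⟨rfl, hsh, hv, rfl, hp⟩
    · rintro ⟨rfl, hsh, hv, rfl, hp⟩
      exact ⟨c, ⟨hsh, hv, hp⟩, rfl, rfl, rfl⟩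

theorem forall_mem_snd_eq_true_zero_iff (L : List (Nd d × Bool × Nd d)) :
    (∀ x ∈ L, x.2 = (true, 0)) ↔ (∀ x ∈ L, x.2.1 = true → x.2.2 = 0) ∧
      ∀ x ∈ L, (if x.2.1 = true then none else some (x.1 + x.2.2)) = none := by
  rw [← forall₂_and]
  refine forall₂_congr fun x _ => ?_
  obtain ⟨l, b, e⟩ := x
  cases b <;> simp

mutual
  theorem mem_cuts_iff {s : Fin d → ℝ} (hs : ∀ i, 1 ≤ s i) (cXi cI : ℝ) {τ : Tr d}
      (hZ : Tr.ZeroO τ) (hC : Tr.Conforms R τ) (c : Ch d) :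
      c ∈ cuts s cXi cI τ ↔ shape c = τ ∧ ValidS true c ∧
        TPlusRed R s cXi cI (setO0 (contract s cXi cI c)) := by
    cases hZ with
    | @node k L B hZB =>
      have hCB : ∀ y ∈ B, Tr.Conforms R y.2 := by cases hC with | node _ h => exact h
      obtain ⟨a', k', kA, L', cs⟩ := c
      rw [cuts, Finset.mem_image, shape, validS_true_node_iff, contract_node, setO0_mul,
        TPlusRed_mul (rootO_setO0 _) (rootO_setO0 _), ← contractList,
        TPlusRed_contractList_iff]
      simp only [Prod.exists, Finset.mem_product, Finset.mem_Iic, mem_cutsB_iff hs cXi cI hZB hCB,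
        node.injEq, Tr.node.injEq, map_pair_eq_iff, forall_mem_snd_eq_true_zero_iff, setO0, setO0B,
        TPlusRed, List.filterMap_eq_nil_iff, List.not_mem_nil, false_imp_iff, implies_true,
        and_true, true_and, AdmissibleEdge, imp_and, forall_and]
      constructor
      · rintro ⟨n, cs, ⟨hn, hsh, hv, he, hp⟩, rfl, rfl, rfl, ⟨hL, hLe, hLf⟩, rfl⟩
        exact ⟨⟨rfl, rfl, hL, hsh⟩, ⟨hn, hLe, he, hv⟩, hLf, hp⟩
      · rintro ⟨⟨rfl, rfl, hL, hsh⟩, ⟨hn, hLe, he, hv⟩, hLf, hp⟩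
        exact ⟨kA, cs, ⟨hn, hsh, hv, he, hp⟩, rfl, rfl, rfl, ⟨hL, hLe, hLf⟩, rfl⟩
  theorem mem_cutsB_iff {s : Fin d → ℝ} (hs : ∀ i, 1 ≤ s i) (cXi cI : ℝ)
      {B : List (Nd d × Tr d)} (hZ : ∀ y ∈ B, Tr.ZeroO y.2) (hC : ∀ y ∈ B, Tr.Conforms R y.2)
      (cs : List (Nd d × Bool × Nd d × Ch d)) :
      cs ∈ cutsB s cXi cI B ↔ shapeB cs = B ∧ ∀ y ∈ cs, AdmissibleEdge R s cXi cI y := by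
    cases B with
    | nil =>
      cases cs with
      | nil => simp [cutsB, shapeB]
      | cons y ys => simp [cutsB, shapeB]
    | cons y ys =>
      obtain ⟨hZy, hZys⟩ := List.forall_mem_cons.1 hZ
      obtain ⟨hCy, hCys⟩ := List.forall_mem_cons.1 hC
      cases cs with
      | nil => simp [cutsB, shapeB]
      | cons w ws =>
        rw [cutsB_cons, mem_image_cons_product,
          mem_edgeCuts_iff R hs cXi cI hZy hCy (mem_cuts_iff hs cXi cI hZy hCy),
          mem_cutsB_iff hs cXi cI hZys hCys, shapeB, List.forall_mem_cons]
        simp only [List.cons.injEq, Prod.ext_iff]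
        tauto
end

end Membership

end Ch

/-- The global (non-recursive) formula for the coaction
`Δ⁺ : 𝒯 → 𝒯 ⊗ 𝒯₊`: for every strongly conforming tree `τ` its coproduct is the sum,
over all rooted subtrees `A` of `τ` containing the root, over all `𝔫_A ≤ 𝔫` and all
boundary decorations `𝔢_A`, of
`(1/𝔢_A!) binom(𝔫,𝔫_A) (A, 𝔫_A+π𝔢_A, 𝔢|_A) ⊗ π₊(τ/A, [𝔫-𝔫_A]_A, 𝔢+𝔢_A)`,
expressed here coefficientwise. -/
theorem deltaPlus_global_formula
    (hd : 0 < d) (s : Fin d → ℝ) (hs : ∀ i, 1 ≤ s i)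
    (cXi cI : ℝ) (hXi : cXi < 0) (hI : 0 < cI)
    (R : Set (Multiset (ET d))) (hnorm : Normal R) (hsub : Subcritical s cXi cI R)
    (τ : Tr d) (hτ : τ ∈ Tcirc R) (σ₁ σ₂ : Tr d) :
    dp s cXi cI τ (σ₁, σ₂)
      = ∑ᶠ c ∈ {c : Ch d | Ch.shape c = τ ∧ Ch.ValidS true c ∧ Ch.extr c = σ₁ ∧
          setO0 (Ch.contract s cXi cI c) = σ₂ ∧ TPlusRed R s cXi cI σ₂}, Ch.wt c := by
  obtain ⟨hZ, hC⟩ := hτ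
  have hset : {c : Ch d | Ch.shape c = τ ∧ Ch.ValidS true c ∧ Ch.extr c = σ₁ ∧
      setO0 (Ch.contract s cXi cI c) = σ₂ ∧ TPlusRed R s cXi cI σ₂} =
      ↑((Ch.cuts s cXi cI τ).filter fun c =>
        (Ch.extr c, setO0 (Ch.contract s cXi cI c)) = (σ₁, σ₂)) := by
    ext c
    simp only [Set.mem_ofPred_eq, Finset.coe_filter, Ch.mem_cuts_iff R hs cXi cI hZ hC,
      Prod.mk.injEq]
    constructor
    · rintro ⟨hsh, hv, hl, rfl, hp⟩
      exact ⟨⟨hsh, hv, hp⟩, hl, rfl⟩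
    · rintro ⟨⟨hsh, hv, hp⟩, hl, rfl⟩
      exact ⟨hsh, hv, hl, rfl, hp⟩
  rw [hset, finsum_mem_coe_finset, Ch.dp_eq_sum_cuts s cXi cI hZ, Finsupp.finsetSum_apply,
    Finset.sum_filter]
  simp_rw [Finsupp.single_apply]

end RS
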